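/- Let a, b, g, h be as in Theorem 1 with a(t) ≥ b(t) ≥ 0, g(t) ≤ t ≤ h(t). Suppose u: [t₁, ∞) → ℝ is nonnegative, locally integrable (extended by 0 for t < t₁) and satisfies the equation u(t) = a(t)·exp(∫_{g(t)}^t u(s) ds) - b(t)·exp(-∫_t^{h(t)} u(s) ds) for almost all t ≥ t₁. Then x(t) := x(t₁)·exp(-∫_{t₁}^t u(s) ds) with x(t₁) > 0 is a positive, nonincreasing solution of x'(t) + a(t)x(g(t)) - b(t)x(h(t)) = 0 for almost all t ≥ t₁. -/

import Mathlib

/-! By Lebesgue's differentiation theorem `x' = -u x` almost everywhere, while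
`x (g t) = x t * exp (∫ s in g t..t, u s)` and `x (h t) = x t * exp (-∫ s in t..h t, u s)`.
Multiplying the equation for `u` by `x t` is therefore exactly the delay-advance equation for `x`. -/

open Real MeasureTheory Filter intervalIntegral

theorem MeasureTheory.LocallyIntegrable.intervalIntegrable {E : Type*} [NormedAddCommGroup E]
    {μ : Measure ℝ} {f : ℝ → E} (hf : LocallyIntegrable f μ) (a b : ℝ) :
    IntervalIntegrable f μ a b :=
  (hf.integrableOn_isCompact isCompact_uIcc).intervalIntegrable

section ExpNegPrimitive

variable {u : ℝ → ℝ} (t₀ c : ℝ)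

theorem monotone_integral_of_nonneg (hu : LocallyIntegrable u volume) (hu₀ : ∀ t, 0 ≤ u t) :
    Monotone fun t => ∫ s in t₀..t, u s := by
  intro s t hst
  dsimp only
  rw [← integral_add_adjacent_intervals (hu.intervalIntegrable t₀ s) (hu.intervalIntegrable s t)]
  exact le_add_of_nonneg_right (integral_nonneg hst fun r _ => hu₀ r)

theorem antitone_mul_exp_neg_integral (hc : 0 ≤ c) (hu : LocallyIntegrable u volume)
    (hu₀ : ∀ t, 0 ≤ u t) :
    Antitone fun t => c * exp (-∫ s in t₀..t, u s) := fun _ _ hst =>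
  mul_le_mul_of_nonneg_left
    (exp_le_exp.2 (neg_le_neg (monotone_integral_of_nonneg t₀ hu hu₀ hst))) hc

theorem ae_hasDerivAt_mul_exp_neg_integral (hu : LocallyIntegrable u volume) :
    ∀ᵐ t, HasDerivAt (fun r => c * exp (-∫ s in t₀..r, u s))
      (-u t * (c * exp (-∫ s in t₀..t, u s))) t := by
  filter_upwards [LocallyIntegrable.ae_hasDerivAt_integral hu] with t ht
  exact (((ht t₀).neg.exp).const_mul c).congr_deriv (by simp only [Pi.neg_apply]; ring)

theorem mul_exp_neg_integral_eq (hu : LocallyIntegrable u volume) (p t : ℝ) :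
    c * exp (-∫ s in t₀..p, u s) = c * exp (-∫ s in t₀..t, u s) * exp (∫ s in p..t, u s) := by
  rw [mul_assoc, ← exp_add, ← integral_interval_sub_left (hu.intervalIntegrable t₀ t)
    (hu.intervalIntegrable t₀ p)]
  ring_nf

end ExpNegPrimitive

theorem stmt_11_general (a b g h u : ℝ → ℝ) (t₁ x₁ : ℝ) (hx₁ : 0 < x₁)
    (hunonneg : ∀ t, 0 ≤ u t)
    (huloc : LocallyIntegrable u volume)
    (hueq : ∀ᵐ t ∂volume, t₁ ≤ t →
      u t = a t * Real.exp (∫ s in (g t)..t, u s)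
        - b t * Real.exp (-∫ s in t..(h t), u s)) :
    (∀ t, t₁ ≤ t → 0 < x₁ * Real.exp (-∫ s in t₁..t, u s)) ∧
    AntitoneOn (fun t => x₁ * Real.exp (-∫ s in t₁..t, u s)) (Set.Ici t₁) ∧
    (∀ᵐ t ∂volume, t₁ ≤ t →
      deriv (fun r => x₁ * Real.exp (-∫ s in t₁..r, u s)) t
        + a t * (x₁ * Real.exp (-∫ s in t₁..(g t), u s))
        - b t * (x₁ * Real.exp (-∫ s in t₁..(h t), u s)) = 0) := by
  refine ⟨fun t _ => by positivity,
    (antitone_mul_exp_neg_integral t₁ x₁ hx₁.le huloc hunonneg).antitoneOn _, ?_⟩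
  filter_upwards [hueq, ae_hasDerivAt_mul_exp_neg_integral t₁ x₁ huloc] with t hu hx ht
  rw [hx.deriv, mul_exp_neg_integral_eq t₁ x₁ huloc (g t) t,
    mul_exp_neg_integral_eq t₁ x₁ huloc (h t) t, integral_symm t (h t), hu ht]
  ring

theorem stmt_11 (a b g h u : ℝ → ℝ) (t₁ x₁ : ℝ) (hx₁ : 0 < x₁)
    (hab : ∀ t, b t ≤ a t) (hb0 : ∀ t, 0 ≤ b t)
    (hgt : ∀ t, g t ≤ t) (hht : ∀ t, t ≤ h t)
    (hunonneg : ∀ t, 0 ≤ u t)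
    (huloc : LocallyIntegrable u volume)
    (huzero : ∀ t, t < t₁ → u t = 0)
    (hueq : ∀ᵐ t ∂volume, t₁ ≤ t →
      u t = a t * Real.exp (∫ s in (g t)..t, u s)
        - b t * Real.exp (-∫ s in t..(h t), u s)) :
    (∀ t, t₁ ≤ t → 0 < x₁ * Real.exp (-∫ s in t₁..t, u s)) ∧
    AntitoneOn (fun t => x₁ * Real.exp (-∫ s in t₁..t, u s)) (Set.Ici t₁) ∧
    (∀ᵐ t ∂volume, t₁ ≤ t →
      deriv (fun r => x₁ * Real.exp (-∫ s in t₁..r, u s)) t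
        + a t * (x₁ * Real.exp (-∫ s in t₁..(g t), u s))
        - b t * (x₁ * Real.exp (-∫ s in t₁..(h t), u s)) = 0) :=
  stmt_11_general a b g h u t₁ x₁ hx₁ hunonneg huloc hueq
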